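/- Let X be a finite nonempty set, let E1, E2 : X → ℝ^d, let s : X → {0,1} be a selection indicator with Σ_{x ∈ X} s(x) > 0, let k ∈ {1,…,d}, and let ε > 0. Then the selected-sample average of the feature disagreement is bounded by ε^{−1} times the selected-sample average of the feature-agreement surrogate loss: (Σ_{x ∈ X} (1 − FeatAgree(E1(x), E2(x); k)) · s(x)) / (Σ_{x ∈ X} s(x)) ≤ ε^{−1} · (Σ_{x ∈ X} ℓ_Ftr(E2(x); E1(x), k) · s(x)) / (Σ_{x ∈ X} s(x)). (This is the empirical bound 1 − BCX ≤ ε^{−1} · surrogate term used to derive the differentiable BCXR-Ftr objective.) -/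

import Mathlib

open Finset

/-- `rnk x i` is the rank (1-indexed) of `|x i|` among `|x 1|,…,|x d|` in descending
order, ties broken by index: it is the unique bijection `[d] → [d]` with
`rnk x i < rnk x j` iff `|x i| > |x j|`, or `|x i| = |x j|` and `i < j`. -/
noncomputable def rnk {d : ℕ} (x : Fin d → ℝ) (i : Fin d) : ℕ :=
  (Finset.univ.filter (fun j => |x i| < |x j| ∨ (|x j| = |x i| ∧ j ≤ i))).card

/-- `TopFeatures(x;k)`: indices whose rank is at most `k`. -/
noncomputable def topFeat {d : ℕ} (x : Fin d → ℝ) (k : ℕ) : Finset (Fin d) :=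
  Finset.univ.filter (fun i => rnk x i ≤ k)

/-- `sign(t) = 1` if `t ≥ 0`, else `-1`. -/
noncomputable def sgn (t : ℝ) : ℝ := if 0 ≤ t then 1 else -1

/-- Top-`k` feature agreement. -/
noncomputable def featAgree {d : ℕ} (e1 e2 : Fin d → ℝ) (k : ℕ) : ℝ :=
  ((topFeat e1 k ∩ topFeat e2 k).card : ℝ) / k

/-- Top-`k` rank agreement. -/
noncomputable def rankAgree {d : ℕ} (e1 e2 : Fin d → ℝ) (k : ℕ) : ℝ :=
  (((topFeat e1 k ∩ topFeat e2 k).filter (fun i => rnk e1 i = rnk e2 i)).card : ℝ) / k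

/-- Top-`k` sign agreement. -/
noncomputable def signAgree {d : ℕ} (e1 e2 : Fin d → ℝ) (k : ℕ) : ℝ :=
  (((topFeat e1 k ∩ topFeat e2 k).filter (fun i => sgn (e1 i) = sgn (e2 i))).card : ℝ) / k

/-- Top-`k` signed-rank agreement. -/
noncomputable def signedRankAgree {d : ℕ} (e1 e2 : Fin d → ℝ) (k : ℕ) : ℝ :=
  (((topFeat e1 k ∩ topFeat e2 k).filter
      (fun i => sgn (e1 i) = sgn (e2 i) ∧ rnk e1 i = rnk e2 i)).card : ℝ) / k

/-- `ψ_feat(e2)`: max of `|e2 i|` over `i ∉ TopFeatures(e1;k)` when `k < d`, else `-ε`. -/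
noncomputable def psiFeat {d : ℕ} (e1 e2 : Fin d → ℝ) (k : ℕ) (ε : ℝ) : ℝ :=
  if k < d then sSup ((fun i => |e2 i|) '' {i : Fin d | i ∉ topFeat e1 k}) else -ε

/-- Feature-agreement surrogate loss `ℓ_Ftr(e2; e1, k)`. -/
noncomputable def lossFtr {d : ℕ} (e2 e1 : Fin d → ℝ) (k : ℕ) (ε : ℝ) : ℝ :=
  (∑ i ∈ topFeat e1 k, max 0 (psiFeat e1 e2 k ε - |e2 i| + ε)) / k

/-- `sortD a j` is the `j`-th largest entry of `a` (for `1 ≤ j ≤ d`). -/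
noncomputable def sortD {d : ℕ} (a : Fin d → ℝ) (j : ℕ) : ℝ :=
  if h : d - j < d then (a ∘ Tuple.sort a) ⟨d - j, h⟩ else 0

/-- Rank-agreement surrogate loss `ℓ_Rnk(e2; e1, k)`: the sum over
`I = {(j,i) : j ∈ [k], rank(e1,i) = j}` is realized as the sum over
`i ∈ TopFeatures(e1;k)` with `j = rnk e1 i`. -/
noncomputable def lossRnk {d : ℕ} (e2 e1 : Fin d → ℝ) (k : ℕ) (ε : ℝ) : ℝ :=
  (∑ i ∈ topFeat e1 k,
    max 0 (sortD (Function.update (fun t => |e2 t|) i (-ε)) (rnk e1 i) - |e2 i| + ε)) / k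

/-- `ψ_sign(e2)`: max of `|e2 i|` over `i ∉ TopFeatures(e1;k)` when `k < d`, else `0`. -/
noncomputable def psiSign {d : ℕ} (e1 e2 : Fin d → ℝ) (k : ℕ) : ℝ :=
  if k < d then sSup ((fun i => |e2 i|) '' {i : Fin d | i ∉ topFeat e1 k}) else 0

/-- Sign-agreement surrogate loss `ℓ_Sgn(e2; e1, k)`. -/
noncomputable def lossSgn {d : ℕ} (e2 e1 : Fin d → ℝ) (k : ℕ) (ε : ℝ) : ℝ :=
  (∑ i ∈ topFeat e1 k, max 0 (psiSign e1 e2 k - sgn (e1 i) * e2 i + ε)) / k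

/-- Signed-rank-agreement surrogate loss `ℓ_SgnRnk(e2; e1, k)`. -/
noncomputable def lossSgnRnk {d : ℕ} (e2 e1 : Fin d → ℝ) (k : ℕ) (ε : ℝ) : ℝ :=
  (∑ i ∈ topFeat e1 k,
    max 0 (sortD (Function.update (fun t => |e2 t|) i 0) (rnk e1 i) - sgn (e1 i) * e2 i + ε)) / k

/-!
Write `T₁ = TopFeatures(e1;k)` and `T₂ = TopFeatures(e2;k)`; both have exactly `k` elements, so
`1 - FeatAgree = |T₁ \ T₂| / k`. If `i ∈ T₁ \ T₂`, then at least `k + 1` features `j` satisfy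
`|e2 j| ≥ |e2 i|`, and one of them lies outside `T₁`; hence `|e2 i| ≤ ψ_feat(e2)` and the hinge term of
`i` is at least `ε`. So `ε (1 - FeatAgree) ≤ ℓ_Ftr` for every sample, and averaging against the
nonnegative weights `s` preserves the inequality.
-/

section RankBy

variable {ι α : Type*} [Fintype ι] [LinearOrder α]

def rankBy (f : ι → α) (i : ι) : ℕ :=
  #{j | f j ≤ f i}

variable {f : ι → α}

theorem rankBy_lt_rankBy {i j : ι} (h : f i < f j) : rankBy f i < rankBy f j := by
  refine Finset.card_lt_card ⟨fun l hl => ?_, fun hsub => ?_⟩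
  · simp only [mem_filter, mem_univ, true_and] at hl ⊢
    exact hl.trans h.le
  · have hj : j ∈ ({l | f l ≤ f j} : Finset ι) := by simp
    simpa [h.not_ge] using hsub hj

theorem rankBy_injective (hf : Function.Injective f) : Function.Injective (rankBy f) := by
  intro i j hij
  by_contra hne
  rcases (hf.ne hne).lt_or_gt with h | h
  · exact (rankBy_lt_rankBy h).ne hij
  · exact (rankBy_lt_rankBy h).ne' hij

theorem one_le_rankBy (f : ι → α) (i : ι) : 1 ≤ rankBy f i :=
  Finset.card_pos.mpr ⟨i, by simp⟩

theorem rankBy_le_card (f : ι → α) (i : ι) : rankBy f i ≤ Fintype.card ι :=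
  Finset.card_filter_le _ _

theorem image_rankBy (hf : Function.Injective f) :
    univ.image (rankBy f) = Icc 1 (Fintype.card ι) := by
  refine Finset.eq_of_subset_of_card_le (fun n hn => ?_) ?_
  · obtain ⟨i, -, rfl⟩ := Finset.mem_image.mp hn
    exact Finset.mem_Icc.mpr ⟨one_le_rankBy f i, rankBy_le_card f i⟩
  · rw [Finset.card_image_of_injective _ (rankBy_injective hf), Nat.card_Icc, card_univ]
    omega

theorem card_rankBy_le (hf : Function.Injective f) {k : ℕ} (hk : k ≤ Fintype.card ι) :
    #{i | rankBy f i ≤ k} = k := by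
  have h : ((univ.image (rankBy f)).filter (· ≤ k)) = Icc 1 k := by
    ext n
    simp only [image_rankBy hf, mem_filter, mem_Icc]
    omega
  rw [Finset.filter_image] at h
  rw [← Finset.card_image_of_injective _ (rankBy_injective hf), h, Nat.card_Icc]
  omega

theorem exists_notMem_le_of_card_lt_rankBy {s : Finset ι} {i : ι} (h : #s < rankBy f i) :
    ∃ j ∉ s, f j ≤ f i := by
  obtain ⟨j, hj, hjs⟩ := Finset.exists_mem_notMem_of_card_lt_card h
  exact ⟨j, hjs, (Finset.mem_filter.mp hj).2⟩

end RankBy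

section TopFeatures

variable {d : ℕ}

def absKey (x : Fin d → ℝ) (j : Fin d) : ℝᵒᵈ ×ₗ Fin d :=
  toLex (OrderDual.toDual |x j|, j)

theorem absKey_injective (x : Fin d → ℝ) : Function.Injective (absKey x) :=
  fun _ _ h => (Prod.ext_iff.mp (toLex.injective h)).2

theorem absKey_le_absKey_iff (x : Fin d → ℝ) (i j : Fin d) :
    absKey x j ≤ absKey x i ↔ |x i| < |x j| ∨ |x j| = |x i| ∧ j ≤ i := by
  simp [absKey, Prod.Lex.toLex_le_toLex]

theorem rnk_eq_rankBy (x : Fin d → ℝ) : rnk x = rankBy (absKey x) := by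
  ext i
  simp only [rnk, rankBy, absKey_le_absKey_iff]

theorem rnk_le (x : Fin d → ℝ) (i : Fin d) : rnk x i ≤ d := by
  simpa [rnk_eq_rankBy] using rankBy_le_card (absKey x) i

theorem card_topFeat (x : Fin d → ℝ) {k : ℕ} (hkd : k ≤ d) : #(topFeat x k) = k := by
  simpa [topFeat, rnk_eq_rankBy] using
    card_rankBy_le (absKey_injective x) (k := k) (by simpa using hkd)

theorem abs_le_psiFeat_of_notMem_topFeat {e1 e2 : Fin d → ℝ} {k : ℕ} (ε : ℝ) (hkd : k ≤ d)
    {i : Fin d} (hi : i ∉ topFeat e2 k) : |e2 i| ≤ psiFeat e1 e2 k ε := by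
  have hrnk : k < rnk e2 i := by simpa [topFeat] using hi
  obtain ⟨j, hj, hji⟩ : ∃ j ∉ topFeat e1 k, absKey e2 j ≤ absKey e2 i := by
    refine exists_notMem_le_of_card_lt_rankBy ?_
    rwa [card_topFeat e1 hkd, ← rnk_eq_rankBy]
  have hle : |e2 i| ≤ |e2 j| := by
    rcases (absKey_le_absKey_iff e2 i j).mp hji with h | ⟨h, -⟩
    exacts [h.le, h.ge]
  rw [psiFeat, if_pos (hrnk.trans_le (rnk_le e2 i))]
  exact hle.trans (le_csSup (Set.toFinite _).bddAbove ⟨j, hj, rfl⟩)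

theorem one_sub_featAgree_eq (e1 e2 : Fin d → ℝ) {k : ℕ} (hk : 1 ≤ k) (hkd : k ≤ d) :
    1 - featAgree e1 e2 k = #(topFeat e1 k \ topFeat e2 k) / k := by
  have hcard : (#(topFeat e1 k \ topFeat e2 k) : ℝ) = k - #(topFeat e1 k ∩ topFeat e2 k) := by
    rw [eq_sub_iff_add_eq, ← Nat.cast_add, Finset.card_sdiff_add_card_inter, card_topFeat e1 hkd]
  have hk0 : (k : ℝ) ≠ 0 := by positivity
  rw [featAgree, hcard]
  field_simp

theorem mul_card_sdiff_topFeat_le (e1 e2 : Fin d → ℝ) {k : ℕ} (hkd : k ≤ d) (ε : ℝ) :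
    ε * #(topFeat e1 k \ topFeat e2 k) ≤
      ∑ i ∈ topFeat e1 k, max 0 (psiFeat e1 e2 k ε - |e2 i| + ε) :=
  calc ε * #(topFeat e1 k \ topFeat e2 k)
      = ∑ _i ∈ topFeat e1 k \ topFeat e2 k, ε := by rw [sum_const, nsmul_eq_mul, mul_comm]
    _ ≤ ∑ i ∈ topFeat e1 k \ topFeat e2 k, max 0 (psiFeat e1 e2 k ε - |e2 i| + ε) := by
      refine Finset.sum_le_sum fun i hi => le_max_of_le_right ?_
      have := abs_le_psiFeat_of_notMem_topFeat (e1 := e1) ε hkd (Finset.mem_sdiff.mp hi).2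
      linarith
    _ ≤ ∑ i ∈ topFeat e1 k, max 0 (psiFeat e1 e2 k ε - |e2 i| + ε) :=
      Finset.sum_le_sum_of_subset_of_nonneg sdiff_subset fun _ _ _ => le_max_left _ _

theorem one_sub_featAgree_le (e1 e2 : Fin d → ℝ) {k : ℕ} (hk : 1 ≤ k) (hkd : k ≤ d)
    {ε : ℝ} (hε : 0 < ε) : 1 - featAgree e1 e2 k ≤ ε⁻¹ * lossFtr e2 e1 k ε := by
  rw [one_sub_featAgree_eq e1 e2 hk hkd, lossFtr, le_inv_mul_iff₀ hε, mul_div_assoc']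
  gcongr
  exact mul_card_sdiff_topFeat_le e1 e2 hkd ε

end TopFeatures

theorem Finset.sum_mul_div_sum_le_mul {X : Type*} (t : Finset X) {f g w : X → ℝ} {c : ℝ}
    (hw : ∀ x ∈ t, 0 ≤ w x) (hfg : ∀ x ∈ t, f x ≤ c * g x) :
    (∑ x ∈ t, f x * w x) / ∑ x ∈ t, w x ≤ c * ((∑ x ∈ t, g x * w x) / ∑ x ∈ t, w x) := by
  rw [← mul_div_assoc, Finset.mul_sum]
  refine div_le_div_of_nonneg_right (Finset.sum_le_sum fun x hx => ?_) (Finset.sum_nonneg hw)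
  rw [← mul_assoc]
  exact mul_le_mul_of_nonneg_right (hfg x hx) (hw x hx)

theorem empirical_bcx_bound_general {d : ℕ} {X : Type*} [Fintype X]
    (E1 E2 : X → Fin d → ℝ) (s : X → ℝ) (hs : ∀ x, s x = 0 ∨ s x = 1)
    (k : ℕ) (hk : 1 ≤ k) (hkd : k ≤ d)
    (ε : ℝ) (hε : 0 < ε) :
    (∑ x, (1 - featAgree (E1 x) (E2 x) k) * s x) / (∑ x, s x) ≤
      ε⁻¹ * ((∑ x, lossFtr (E2 x) (E1 x) k ε * s x) / (∑ x, s x)) :=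
  univ.sum_mul_div_sum_le_mul (fun x _ => by rcases hs x with h | h <;> simp [h])
    fun x _ => one_sub_featAgree_le (E1 x) (E2 x) hk hkd hε

/-- Empirical bound used to derive the BCXR-Ftr objective: over a finite nonempty
sample `X` with a `{0,1}` selection indicator `s` of positive total mass, the
selected-sample average feature disagreement is at most `ε⁻¹` times the
selected-sample average surrogate loss. -/
theorem empirical_bcx_bound {d : ℕ} {X : Type*} [Fintype X] [Nonempty X]
    (E1 E2 : X → Fin d → ℝ) (s : X → ℝ) (hs : ∀ x, s x = 0 ∨ s x = 1)
    (hsum : 0 < ∑ x, s x) (k : ℕ) (hk : 1 ≤ k) (hkd : k ≤ d)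
    (ε : ℝ) (hε : 0 < ε) :
    (∑ x, (1 - featAgree (E1 x) (E2 x) k) * s x) / (∑ x, s x) ≤
      ε⁻¹ * ((∑ x, lossFtr (E2 x) (E1 x) k ε * s x) / (∑ x, s x)) :=
  empirical_bcx_bound_general E1 E2 s hs k hk hkd ε hε
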